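/- The Smith–Kidger Type 3 space P₂ ⊕ span{x₁x₂x₃, x₁³, x₂³, x₃³} together with point evaluations at the eight vertices (±1,±1,±1) and six face-centroids of [−1,1]³ is not unisolvent: there exists a nonzero polynomial in this space vanishing at all 14 nodes. -/
import Mathlib


open MvPolynomial

noncomputable def SK3 : Submodule ℝ (MvPolynomial (Fin 3) ℝ) :=
  MvPolynomial.restrictTotalDegree (Fin 3) ℝ 2 ⊔
    Submodule.span ℝ {X 0 * X 1 * X 2, X 0 ^ 3, X 1 ^ 3, X 2 ^ 3}

theorem stmt19 :
    ∃ p ∈ SK3, p ≠ 0 ∧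
      (∀ j k l : ℝ, (j = 1 ∨ j = -1) → (k = 1 ∨ k = -1) → (l = 1 ∨ l = -1) →
        eval ![j, k, l] p = 0) ∧
      (∀ s : ℝ, (s = 1 ∨ s = -1) →
        eval ![s, 0, 0] p = 0 ∧ eval ![0, s, 0] p = 0 ∧ eval ![0, 0, s] p = 0) := by
  refine ⟨X 0 ^ 3 - X 0, ?_, ?_, ?_, ?_⟩
  · apply Submodule.sub_mem
    · exact Submodule.mem_sup_right (Submodule.subset_span (by simp))
    · apply Submodule.mem_sup_left
      rw [MvPolynomial.mem_restrictTotalDegree]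
      simpa using (MvPolynomial.totalDegree_X (R := ℝ) 0).le.trans one_le_two
  · intro h
    have := congrArg (eval ![2, 0, 0]) h
    simp at this
    norm_num at this
  · rintro j k l (rfl | rfl) _ _ <;> norm_num
  · rintro s (rfl | rfl) <;> refine ⟨?_, ?_, ?_⟩ <;> norm_num
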